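/- Let l > 0 and let v ∈ C¹(B_l, ℝ²). Let Π : ℝ² → ℝ² be the nearest-point projection onto the closed unit disc, i.e. Π(y) = y if |y| ≤ 1 and Π(y) = y/|y| if |y| > 1. Then Π ∘ v is locally Lipschitz on B_l (hence differentiable a.e.), and ∫_{B_l} √(1 + |∇(Π∘v)(x)|² + (det ∇(Π∘v)(x))²) dx ≤ ∫_{B_l} √(1 + |∇v(x)|² + (det ∇v(x))²) dx, where ∇(Π∘v) denotes the a.e.-defined Jacobian matrix. -/

import Mathlib

open MeasureTheory Filter Metric Topology
open scoped ENNReal NNReal RealInnerProductSpace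

noncomputable section

abbrev V2 : Type := EuclideanSpace ℝ (Fin 2)

/-- Squared Frobenius norm of (the matrix of) a continuous linear map on `ℝ²`. -/
def frobSq (L : V2 →L[ℝ] V2) : ℝ :=
  ∑ i : Fin 2, ∑ j : Fin 2, (L (EuclideanSpace.single j 1) i) ^ 2

/-- Determinant of (the matrix of) a continuous linear map on `ℝ²`. -/
def detJ (L : V2 →L[ℝ] V2) : ℝ :=
  L (EuclideanSpace.single 0 1) 0 * L (EuclideanSpace.single 1 1) 1 -
    L (EuclideanSpace.single 1 1) 0 * L (EuclideanSpace.single 0 1) 1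

/-- The vortex map `x ↦ x / |x|` (equal to `0` at the origin). -/
def vortex (x : V2) : V2 := ‖x‖⁻¹ • x

/-- The area integrand `√(1 + |∇v|² + (det ∇v)²)`. -/
def areaIntegrand (v : V2 → V2) (x : V2) : ℝ :=
  Real.sqrt (1 + frobSq (fderiv ℝ v x) + detJ (fderiv ℝ v x) ^ 2)

/-- Area of the graph of `v` over the set `E`. -/
def graphArea (v : V2 → V2) (E : Set V2) : ℝ≥0∞ :=
  ∫⁻ x in E, ENNReal.ofReal (areaIntegrand v x)

/-- `∫_{B_l} √(1 + |∇u|²) dx` for the vortex map `u`. -/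
def vortexGradArea (l : ℝ) : ℝ≥0∞ :=
  ∫⁻ x in ball (0 : V2) l, ENNReal.ofReal (Real.sqrt (1 + frobSq (fderiv ℝ vortex x)))

/-- The `L¹`-relaxed area of the graph of the vortex map over `B_l`:
the infimum of `liminf_k 𝒜(v_k, B_l)` over all sequences `(v_k)` of maps that are
`C¹` on `B_l` and converge to the vortex map in `L¹(B_l, ℝ²)`. -/
def relaxedArea (l : ℝ) : ℝ≥0∞ :=
  sInf { a : ℝ≥0∞ | ∃ v : ℕ → V2 → V2,
    (∀ k, ContDiffOn ℝ 1 (v k) (ball (0 : V2) l)) ∧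
    Tendsto (fun k => ∫⁻ x in ball (0 : V2) l, ENNReal.ofReal ‖v k x - vortex x‖)
      atTop (𝓝 0) ∧
    a = Filter.liminf (fun k => graphArea (v k) (ball (0 : V2) l)) atTop }

/-- The nearest-point projection of `ℝ²` onto the closed unit disc. -/
def projDisc (y : V2) : V2 := if ‖y‖ ≤ 1 then y else ‖y‖⁻¹ • y

lemma norm_le_of_sq_le (u w : V2) (h : ‖u‖^2 ≤ ‖w‖^2) : ‖u‖ ≤ ‖w‖ := by
  nlinarith [norm_nonneg u, norm_nonneg w]

lemma projDisc_norm_le (y : V2) : ‖projDisc y‖ ≤ 1 := by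
  unfold projDisc
  split_ifs with h
  · exact h
  · push_neg at h
    have hy : y ≠ 0 := by intro h0; rw [h0] at h; simp at h; linarith
    rw [norm_smul, norm_inv, norm_norm, inv_mul_cancel₀ (norm_ne_zero_iff.2 hy)]

lemma projDisc_norm_of_one_le (y : V2) (h : 1 ≤ ‖y‖) : ‖projDisc y‖ = 1 := by
  unfold projDisc
  split_ifs with h1
  · linarith
  · have hy : y ≠ 0 := by intro h0; rw [h0] at h; simp at h; linarith
    rw [norm_smul, norm_inv, norm_norm, inv_mul_cancel₀ (norm_ne_zero_iff.2 hy)]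

lemma projDisc_mixed (y z : V2) (hy : ‖y‖ ≤ 1) (hz : 1 < ‖z‖) :
    ‖y - ‖z‖⁻¹ • z‖ ≤ ‖y - z‖ := by
  apply norm_le_of_sq_le
  have hz0 : (0:ℝ) < ‖z‖ := by linarith
  have hz0' : ‖z‖ ≠ 0 := ne_of_gt hz0
  have ht : ⟪y,z⟫ ≤ ‖y‖*‖z‖ := real_inner_le_norm y z
  have e1 : ‖y - ‖z‖⁻¹ • z‖^2 = ‖y‖^2 - 2*(‖z‖⁻¹*⟪y,z⟫) + 1 := by
    rw [norm_sub_sq_real, real_inner_smul_right, norm_smul, norm_inv, norm_norm,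
      inv_mul_cancel₀ hz0']
    ring
  have e2 : ‖y - z‖^2 = ‖y‖^2 - 2*⟪y,z⟫ + ‖z‖^2 := norm_sub_sq_real y z
  rw [e1, e2]
  have key : 0 ≤ ‖z‖*(‖z‖-1)^2 + 2*(‖z‖ - ⟪y,z⟫)*(‖z‖-1) := by
    have h1 : ⟪y,z⟫ ≤ ‖z‖ := le_trans ht (by nlinarith)
    nlinarith
  have h2 : 0 ≤ ‖z‖⁻¹ * (‖z‖*(‖z‖-1)^2 + 2*(‖z‖ - ⟪y,z⟫)*(‖z‖-1)) :=
    mul_nonneg (by positivity) key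
  rw [show ‖z‖⁻¹ * (‖z‖*(‖z‖-1)^2 + 2*(‖z‖ - ⟪y,z⟫)*(‖z‖-1))
      = (‖y‖^2 - 2*⟪y,z⟫ + ‖z‖^2) - (‖y‖^2 - 2*(‖z‖⁻¹*⟪y,z⟫) + 1) from by
    field_simp; ring] at h2
  linarith

lemma projDisc_outer (y z : V2) (hy : 1 < ‖y‖) (hz : 1 < ‖z‖) :
    ‖‖y‖⁻¹ • y - ‖z‖⁻¹ • z‖ ≤ ‖y - z‖ := by
  apply norm_le_of_sq_le
  have hy0 : (0:ℝ) < ‖y‖ := by linarith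
  have hz0 : (0:ℝ) < ‖z‖ := by linarith
  have hy0' : ‖y‖ ≠ 0 := ne_of_gt hy0
  have hz0' : ‖z‖ ≠ 0 := ne_of_gt hz0
  have ht : ⟪y,z⟫ ≤ ‖y‖*‖z‖ := real_inner_le_norm y z
  have e1 : ‖‖y‖⁻¹ • y - ‖z‖⁻¹ • z‖^2 = 2 - 2*(‖y‖⁻¹*(‖z‖⁻¹*⟪y,z⟫)) := by
    rw [norm_sub_sq_real, real_inner_smul_right, real_inner_smul_left, norm_smul, norm_smul,
      norm_inv, norm_norm, norm_inv, norm_norm, inv_mul_cancel₀ hy0', inv_mul_cancel₀ hz0']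
    ring
  have e2 : ‖y - z‖^2 = ‖y‖^2 - 2*⟪y,z⟫ + ‖z‖^2 := norm_sub_sq_real y z
  rw [e1, e2]
  have key : 0 ≤ ‖y‖*‖z‖*(‖y‖-‖z‖)^2 + 2*(‖y‖*‖z‖ - ⟪y,z⟫)*(‖y‖*‖z‖-1) := by
    have t1 : 0 ≤ ‖y‖*‖z‖*(‖y‖-‖z‖)^2 := by positivity
    have t2 : 0 ≤ 2*(‖y‖*‖z‖ - ⟪y,z⟫)*(‖y‖*‖z‖-1) := by
      have hab : (1:ℝ) ≤ ‖y‖*‖z‖ := by nlinarith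
      have := sub_nonneg.2 ht
      nlinarith
    linarith
  have h2 : 0 ≤ (‖y‖*‖z‖)⁻¹ * (‖y‖*‖z‖*(‖y‖-‖z‖)^2 + 2*(‖y‖*‖z‖ - ⟪y,z⟫)*(‖y‖*‖z‖-1)) :=
    mul_nonneg (by positivity) key
  rw [show (‖y‖*‖z‖)⁻¹ * (‖y‖*‖z‖*(‖y‖-‖z‖)^2 + 2*(‖y‖*‖z‖ - ⟪y,z⟫)*(‖y‖*‖z‖-1))
      = (‖y‖^2 - 2*⟪y,z⟫ + ‖z‖^2) - (2 - 2*(‖y‖⁻¹*(‖z‖⁻¹*⟪y,z⟫))) from by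
    field_simp; ring] at h2
  linarith

lemma projDisc_sub_le (y z : V2) : ‖projDisc y - projDisc z‖ ≤ ‖y - z‖ := by
  unfold projDisc
  split_ifs with h1 h2 h2
  · exact le_refl _
  · exact projDisc_mixed y z h1 (not_le.1 h2)
  · rw [show ‖‖y‖⁻¹ • y - z‖ = ‖z - ‖y‖⁻¹ • y‖ from norm_sub_rev _ _,
      show ‖y - z‖ = ‖z - y‖ from norm_sub_rev _ _]
    exact projDisc_mixed z y h2 (not_le.1 h1)
  · exact projDisc_outer y z (not_le.1 h1) (not_le.1 h2)

lemma projDisc_lipschitz : LipschitzWith 1 projDisc := by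
  rw [lipschitzWith_iff_dist_le_mul]
  intro y z
  simpa [dist_eq_norm] using projDisc_sub_le y z

lemma frobSq_nonneg (L : V2 →L[ℝ] V2) : 0 ≤ frobSq L := by
  unfold frobSq; positivity

lemma frobSq_eq (L : V2 →L[ℝ] V2) :
    frobSq L = ∑ j : Fin 2, ‖L (EuclideanSpace.single j 1)‖^2 := by
  unfold frobSq
  rw [Finset.sum_comm]
  refine Finset.sum_congr rfl fun j _ => ?_
  rw [EuclideanSpace.norm_eq, Real.sq_sqrt (by positivity)]
  simp [Real.norm_eq_abs, sq_abs]

lemma frobSq_le (A B : V2 →L[ℝ] V2) (h : ∀ w, ‖A w‖ ≤ ‖B w‖) : frobSq A ≤ frobSq B := by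
  rw [frobSq_eq, frobSq_eq]
  exact Finset.sum_le_sum fun j _ => pow_le_pow_left₀ (norm_nonneg _) (h _) 2

lemma detJ_eq_zero_of_inner (A : V2 →L[ℝ] V2) (n : V2) (hn : n ≠ 0)
    (h : ∀ w, ⟪n, A w⟫ = 0) : detJ A = 0 := by
  have h0 := h (EuclideanSpace.single 0 1)
  have h1 := h (EuclideanSpace.single 1 1)
  simp only [PiLp.inner_apply, RCLike.inner_apply, conj_trivial, Fin.sum_univ_two] at h0 h1
  have hne : n 0 ≠ 0 ∨ n 1 ≠ 0 := by
    by_contra hc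
    push_neg at hc
    exact hn (by ext i; fin_cases i <;> simp [hc.1, hc.2])
  unfold detJ
  rcases hne with hp | hq
  · have : n 0 * (A (EuclideanSpace.single 0 1) 0 * A (EuclideanSpace.single 1 1) 1 -
        A (EuclideanSpace.single 1 1) 0 * A (EuclideanSpace.single 0 1) 1) = 0 := by
      linear_combination (A (EuclideanSpace.single 1 1) 1) * h0 -
        (A (EuclideanSpace.single 0 1) 1) * h1
    exact (mul_eq_zero.1 this).resolve_left hp
  · have : n 1 * (A (EuclideanSpace.single 0 1) 0 * A (EuclideanSpace.single 1 1) 1 -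
        A (EuclideanSpace.single 1 1) 0 * A (EuclideanSpace.single 0 1) 1) = 0 := by
      linear_combination (A (EuclideanSpace.single 0 1) 0) * h1 -
        (A (EuclideanSpace.single 1 1) 0) * h0
    exact (mul_eq_zero.1 this).resolve_left hq

lemma norm_fderiv_comp_apply_le (v : V2 → V2) (x h : V2)
    (hv : DifferentiableAt ℝ v x) (hg : DifferentiableAt ℝ (projDisc ∘ v) x) :
    ‖fderiv ℝ (projDisc ∘ v) x h‖ ≤ ‖fderiv ℝ v x h‖ := by
  set c : ℝ → V2 := fun t => x + t • h with hc_def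
  have hc : HasDerivAt c h 0 := by
    exact (((hasDerivAt_id (0:ℝ)).smul_const h).const_add x).congr_deriv (one_smul ℝ h)
  have hc0 : c 0 = x := by simp [hc_def]
  have hgx : HasFDerivAt (projDisc ∘ v) (fderiv ℝ (projDisc ∘ v) x) (c 0) := by
    rw [hc0]; exact hg.hasFDerivAt
  have hvx : HasFDerivAt v (fderiv ℝ v x) (c 0) := by
    rw [hc0]; exact hv.hasFDerivAt
  have hψ : HasDerivAt ((projDisc ∘ v) ∘ c) (fderiv ℝ (projDisc ∘ v) x h) 0 :=
    hgx.comp_hasDerivAt 0 hc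
  have hφ : HasDerivAt (v ∘ c) (fderiv ℝ v x h) 0 := hvx.comp_hasDerivAt 0 hc
  rw [hasDerivAt_iff_tendsto_slope] at hψ hφ
  refine le_of_tendsto_of_tendsto' hψ.norm hφ.norm fun t => ?_
  rw [slope_def_module, slope_def_module, norm_smul, norm_smul]
  refine mul_le_mul_of_nonneg_left ?_ (norm_nonneg _)
  exact projDisc_sub_le (v (c t)) (v (c 0))

lemma area_pointwise (v : V2 → V2) (x : V2) (hvx : DifferentiableAt ℝ v x) :
    areaIntegrand (projDisc ∘ v) x ≤ areaIntegrand v x := by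
  have hfr : 0 ≤ frobSq (fderiv ℝ v x) := frobSq_nonneg _
  have hdet2 : 0 ≤ detJ (fderiv ℝ v x) ^ 2 := sq_nonneg _
  by_cases hg : DifferentiableAt ℝ (projDisc ∘ v) x
  · by_cases hlt : ‖v x‖ < 1
    · have hev : ∀ᶠ y in 𝓝 x, ‖v y‖ < 1 :=
        hvx.continuousAt.norm.eventually_lt_const hlt
      have heq : (projDisc ∘ v) =ᶠ[𝓝 x] v :=
        hev.mono fun y hy => by simp [Function.comp, projDisc, hy.le]
      unfold areaIntegrand
      rw [heq.fderiv_eq]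
    · push_neg at hlt
      have hAle : frobSq (fderiv ℝ (projDisc ∘ v) x) ≤ frobSq (fderiv ℝ v x) :=
        frobSq_le _ _ fun w => norm_fderiv_comp_apply_le v x w hvx hg
      have hgx1 : ‖projDisc (v x)‖ = 1 := projDisc_norm_of_one_le _ hlt
      have hmax : IsLocalMax (fun y => (⟪(projDisc ∘ v) y, (projDisc ∘ v) y⟫:ℝ)) x := by
        refine Filter.Eventually.of_forall fun y => ?_
        simp only [Function.comp_apply, real_inner_self_eq_norm_sq]
        rw [hgx1]
        nlinarith [projDisc_norm_le (v y), norm_nonneg (projDisc (v y))]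
      have hz := hmax.fderiv_eq_zero
      have hinner : ∀ w, ⟪(projDisc ∘ v) x, fderiv ℝ (projDisc ∘ v) x w⟫ = 0 := by
        intro w
        have he := fderiv_inner_apply ℝ hg hg w
        rw [hz] at he
        simp only [ContinuousLinearMap.zero_apply] at he
        rw [real_inner_comm ((fderiv ℝ (projDisc ∘ v) x) w) ((projDisc ∘ v) x)] at he
        rw [real_inner_comm]
        linarith [he]
      have hgx1' : ‖(projDisc ∘ v) x‖ = 1 := hgx1
      have hgx0 : (projDisc ∘ v) x ≠ 0 := by
        intro h0; rw [h0] at hgx1'; simp at hgx1'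
      have hdet : detJ (fderiv ℝ (projDisc ∘ v) x) = 0 :=
        detJ_eq_zero_of_inner _ _ hgx0 hinner
      unfold areaIntegrand
      rw [hdet]
      apply Real.sqrt_le_sqrt
      nlinarith
  · unfold areaIntegrand
    rw [fderiv_zero_of_not_differentiableAt hg]
    have : frobSq (0 : V2 →L[ℝ] V2) = 0 := by simp [frobSq]
    have hd0 : detJ (0 : V2 →L[ℝ] V2) = 0 := by simp [detJ]
    rw [this, hd0]
    have h1 : Real.sqrt (1+0+0^2) = 1 := by norm_num
    rw [h1]
    calc (1:ℝ) = Real.sqrt 1 := Real.sqrt_one.symm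
      _ ≤ _ := Real.sqrt_le_sqrt (by linarith)

/-- Composing with the projection onto the closed unit disc does not increase the graph
area: for `v ∈ C¹(B_l, ℝ²)`, the map `Π ∘ v` is locally Lipschitz on `B_l` and the area
of its graph over `B_l` is at most that of `v`. -/
theorem projection_decreases_area (l : ℝ) (hl : 0 < l) (v : V2 → V2)
    (hv : ContDiffOn ℝ 1 v (ball (0 : V2) l)) :
    (∀ x ∈ ball (0 : V2) l, ∃ (K : ℝ≥0) (t : Set V2), t ∈ 𝓝 x ∧
      LipschitzOnWith K (projDisc ∘ v) t) ∧
    ∫⁻ x in ball (0 : V2) l, ENNReal.ofReal (areaIntegrand (projDisc ∘ v) x)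
      ≤ ∫⁻ x in ball (0 : V2) l, ENNReal.ofReal (areaIntegrand v x) := by
  constructor
  · intro x hx
    obtain ⟨K, t, ht, hK⟩ := (hv.contDiffAt (isOpen_ball.mem_nhds hx)).exists_lipschitzOnWith
    exact ⟨1 * K, t, ht, projDisc_lipschitz.comp_lipschitzOnWith hK⟩
  · refine lintegral_mono_ae ((ae_restrict_iff' measurableSet_ball).2 (ae_of_all _ fun x hx => ?_))
    refine ENNReal.ofReal_le_ofReal (area_pointwise v x ?_)
    exact (hv.contDiffAt (isOpen_ball.mem_nhds hx)).differentiableAt one_ne_zero
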